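/- arXiv:math/0703714 — 3 statements merged into one kernel-verified Lean document; each statement's English description precedes it below -/
import Mathlib

section
/- Let S,K>0, r∈ℝ, σ>0, T>0, and let p(x) = (1/(σ√(2πT))) exp(-(x+σ²T/2)²/(2σ²T)). Then ∫_{log(K/S)-rT}^{∞} (S e^{x+rT} - K) p(x) dx = S e^{rT} N(d₁) - K N(d₂), where N is the standard normal CDF, d₁ = (log(S/K) + (r+σ²/2)T)/(σ√T) and d₂ = (log(S/K) + (r-σ²/2)T)/(σ√T). -/
open MeasureTheory Real

/-- Standard normal cumulative distribution function. -/
noncomputable def stdNormalCDF (x : ℝ) : ℝ :=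
  ∫ t in Set.Iic x, Real.exp (-t ^ 2 / 2) / Real.sqrt (2 * Real.pi)

/-! The density is that of `N(-σ²T/2, σ²T)` in `x`. Completing the square, `eˣ` times the density
of `N(μ, v)` is `e^{μ + v/2}` times the density of `N(μ + v, v)`, so the payoff integral splits
into two Gaussian tail probabilities, and standardizing `N(μ, v)` turns each into a value of `N`. -/

open ProbabilityTheory Set
open scoped NNReal

lemma stdNormalCDF_eq_measureReal_Iic (x : ℝ) :
    stdNormalCDF x = (gaussianReal 0 1).real (Iic x) := by
  rw [measureReal_def, gaussianReal_apply_eq_integral _ one_ne_zero,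
    ENNReal.toReal_ofReal (setIntegral_nonneg measurableSet_Iic
      fun t _ ↦ gaussianPDFReal_nonneg 0 1 t), stdNormalCDF]
  simp [gaussianPDFReal, div_eq_inv_mul]

lemma gaussianReal_map_standardize (μ : ℝ) {v : ℝ≥0} (hv : v ≠ 0) :
    (gaussianReal μ v).map (fun x ↦ (x - μ) / √v) = gaussianReal 0 1 := by
  rw [show (fun x ↦ (x - μ) / √v) = (· / √v) ∘ (· - μ) from rfl,
    ← Measure.map_map (by fun_prop) (by fun_prop), gaussianReal_map_sub_const,
    gaussianReal_map_div_const, sub_self, zero_div]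
  congr 1
  ext
  simp [Real.sq_sqrt, hv]

lemma measureReal_gaussianReal_Iic (μ : ℝ) {v : ℝ≥0} (hv : v ≠ 0) (b : ℝ) :
    (gaussianReal μ v).real (Iic b) = stdNormalCDF ((b - μ) / √v) := by
  have hs : 0 < √(v : ℝ) := Real.sqrt_pos.2 (by positivity)
  rw [stdNormalCDF_eq_measureReal_Iic, ← gaussianReal_map_standardize μ hv,
    map_measureReal_apply (by fun_prop) measurableSet_Iic]
  congr 1
  ext x
  simp [div_le_div_iff_of_pos_right hs]

lemma setIntegral_gaussianPDFReal_Iic (μ : ℝ) {v : ℝ≥0} (hv : v ≠ 0) (b : ℝ) :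
    ∫ x in Iic b, gaussianPDFReal μ v x = stdNormalCDF ((b - μ) / √v) := by
  rw [← measureReal_gaussianReal_Iic μ hv, measureReal_def, gaussianReal_apply_eq_integral _ hv,
    ENNReal.toReal_ofReal (setIntegral_nonneg measurableSet_Iic
      fun x _ ↦ gaussianPDFReal_nonneg μ v x)]

lemma gaussianPDFReal_neg (μ : ℝ) (v : ℝ≥0) (x : ℝ) :
    gaussianPDFReal μ v (-x) = gaussianPDFReal (-μ) v x := by
  rw [gaussianPDFReal, gaussianPDFReal, sub_neg_eq_add, ← neg_add', neg_sq]

lemma setIntegral_gaussianPDFReal_Ioi (μ : ℝ) {v : ℝ≥0} (hv : v ≠ 0) (a : ℝ) :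
    ∫ x in Ioi a, gaussianPDFReal μ v x = stdNormalCDF ((μ - a) / √v) := by
  have hreflect := integral_comp_neg_Ioi a (gaussianPDFReal (-μ) v)
  simp only [gaussianPDFReal_neg, neg_neg] at hreflect
  rw [hreflect, setIntegral_gaussianPDFReal_Iic _ hv, neg_sub_neg]

lemma exp_mul_gaussianPDFReal (μ : ℝ) (v : ℝ≥0) (x : ℝ) :
    exp x * gaussianPDFReal μ v x = exp (μ + v / 2) * gaussianPDFReal (μ + v) v x := by
  rcases eq_or_ne v 0 with rfl | hv
  · simp
  have hv' : (v : ℝ) ≠ 0 := by positivity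
  simp only [gaussianPDFReal]
  rw [mul_left_comm, mul_left_comm (exp _), ← exp_add, ← exp_add]
  congr 2
  field_simp
  ring

lemma setIntegral_Ioi_call_payoff_gaussianPDFReal (A K a μ : ℝ) {v : ℝ≥0} (hv : v ≠ 0) :
    ∫ x in Ioi a, (A * exp x - K) * gaussianPDFReal μ v x =
      A * exp (μ + v / 2) * stdNormalCDF ((μ + v - a) / √v) -
        K * stdNormalCDF ((μ - a) / √v) := by
  have hint (m : ℝ) : IntegrableOn (gaussianPDFReal m v) (Ioi a) :=
    (integrable_gaussianPDFReal m v).integrableOn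
  simp_rw [sub_mul, mul_assoc, exp_mul_gaussianPDFReal]
  rw [integral_sub (((hint _).const_mul _).const_mul _) ((hint _).const_mul _),
    integral_const_mul, integral_const_mul, integral_const_mul,
    setIntegral_gaussianPDFReal_Ioi _ hv, setIntegral_gaussianPDFReal_Ioi _ hv]

theorem call_payoff_expectation (S K r σ T : ℝ) (hS : 0 < S) (hK : 0 < K)
    (hσ : 0 < σ) (hT : 0 < T) :
    ∫ x in Set.Ioi (Real.log (K / S) - r * T),
        (S * Real.exp (x + r * T) - K) *
          ((1 / (σ * Real.sqrt (2 * Real.pi * T))) *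
            Real.exp (-(x + σ ^ 2 * T / 2) ^ 2 / (2 * σ ^ 2 * T))) =
      S * Real.exp (r * T) *
          stdNormalCDF ((Real.log (S / K) + (r + σ ^ 2 / 2) * T) / (σ * Real.sqrt T)) -
        K * stdNormalCDF ((Real.log (S / K) + (r - σ ^ 2 / 2) * T) / (σ * Real.sqrt T)) := by
  set v : ℝ≥0 := ⟨σ ^ 2 * T, by positivity⟩
  have hv_coe : (v : ℝ) = σ ^ 2 * T := rfl
  have hv : v ≠ 0 := by
    rw [Ne, ← NNReal.coe_eq_zero, hv_coe]
    positivity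
  have hsqrt : √(v : ℝ) = σ * √T := by
    rw [hv_coe, Real.sqrt_mul (sq_nonneg σ), Real.sqrt_sq hσ.le]
  have hdensity (x : ℝ) :
      1 / (σ * √(2 * π * T)) * exp (-(x + σ ^ 2 * T / 2) ^ 2 / (2 * σ ^ 2 * T)) =
        gaussianPDFReal (-(v / 2)) v x := by
    rw [gaussianPDFReal, hv_coe, sub_neg_eq_add, one_div, ← mul_assoc 2 (σ ^ 2) T,
      show 2 * π * (σ ^ 2 * T) = σ ^ 2 * (2 * π * T) by ring, Real.sqrt_mul (sq_nonneg σ),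
      Real.sqrt_sq hσ.le]
  have hpayoff (x : ℝ) : S * exp (x + r * T) - K = S * exp (r * T) * exp x - K := by
    rw [exp_add]
    ring
  simp_rw [hpayoff, hdensity]
  rw [setIntegral_Ioi_call_payoff_gaussianPDFReal _ _ _ _ hv, hsqrt,
    Real.log_div hK.ne' hS.ne', Real.log_div hS.ne' hK.ne', hv_coe, neg_add_cancel, exp_zero,
    mul_one]
  ring_nf
end

section
/- Let S,K>0, r∈ℝ, σ>0, T>0, and a(x) = max(S e^{x+rT} - K, 0). With p the density of the normal distribution with mean -σ²T/2 and variance σ²T, ∫_{-∞}^{∞} a(x) p(x) dx = S e^{rT} N(d₁) - K N(d₂), where d₁ = (log(S/K)+(r+σ²/2)T)/(σ√T), d₂ = d₁ - σ√T. -/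
open MeasureTheory Real

lemma gauss_integrable (μ τ : ℝ) (hτ : 0 < τ) :
    Integrable (fun x : ℝ => Real.exp (-(x - μ) ^ 2 / (2 * τ ^ 2)) / (τ * Real.sqrt (2 * Real.pi))) := by
  have hb : (0:ℝ) < 1 / (2 * τ ^ 2) := by positivity
  have h : Integrable (fun x : ℝ => Real.exp (-(1 / (2 * τ ^ 2)) * x ^ 2)) :=
    integrable_exp_neg_mul_sq hb
  have h1 : Integrable (fun x : ℝ => Real.exp (-(1 / (2 * τ ^ 2)) * (x - μ) ^ 2)) :=
    h.comp_sub_right μ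
  have h2 := h1.div_const (τ * Real.sqrt (2 * Real.pi))
  have hfun : (fun x : ℝ => Real.exp (-(x - μ) ^ 2 / (2 * τ ^ 2)) / (τ * Real.sqrt (2 * Real.pi)))
      = fun x : ℝ => Real.exp (-(1 / (2 * τ ^ 2)) * (x - μ) ^ 2) / (τ * Real.sqrt (2 * Real.pi)) := by
    funext x
    congr 2
    ring
  rw [hfun]
  exact h2

lemma gauss_tail (μ b τ : ℝ) (hτ : 0 < τ) :
    (∫ x in Set.Ici b, Real.exp (-(x - μ) ^ 2 / (2 * τ ^ 2)) / (τ * Real.sqrt (2 * Real.pi)))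
      = stdNormalCDF ((μ - b) / τ) := by
  set f : ℝ → ℝ := fun x => Real.exp (-(x - μ) ^ 2 / (2 * τ ^ 2)) / (τ * Real.sqrt (2 * Real.pi))
  set g : ℝ → ℝ := fun t => μ - τ * t with hg_def
  have hgcomp : g = (fun x => μ + x) ∘ (fun x => -τ * x) := by
    funext t; simp [hg_def, sub_eq_add_neg, neg_mul]
  have hemb : MeasurableEmbedding g := by
    rw [hgcomp]
    exact ((Homeomorph.addLeft μ).isClosedEmbedding.measurableEmbedding).comp
      ((Homeomorph.mulLeft₀ (-τ) (neg_ne_zero.mpr hτ.ne')).isClosedEmbedding.measurableEmbedding)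
  have hmap : Measure.map g volume = ENNReal.ofReal τ⁻¹ • volume := by
    rw [hgcomp, ← Measure.map_map (measurable_const_add μ) (measurable_const_mul (-τ)),
      Real.map_volume_mul_left (by simpa using hτ.ne' : (-τ : ℝ) ≠ 0), Measure.map_smul,
      MeasureTheory.map_add_left_eq_self volume μ, abs_inv, abs_neg, abs_of_pos hτ]
  have hpre : g ⁻¹' Set.Ici b = Set.Iic ((μ - b) / τ) := by
    ext t
    simp only [Set.mem_preimage, Set.mem_Ici, Set.mem_Iic, hg_def, le_div_iff₀ hτ]
    constructor <;> intro h <;> nlinarith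
  have key := hemb.setIntegral_map (μ := volume) f (Set.Ici b)
  rw [hmap, hpre] at key
  rw [Measure.restrict_smul, integral_smul_measure, ENNReal.toReal_ofReal (by positivity)] at key
  have hfg : ∀ t, f (g t) = τ⁻¹ * (Real.exp (-t ^ 2 / 2) / Real.sqrt (2 * Real.pi)) := by
    intro t
    simp only [f, hg_def]
    rw [show -(μ - τ * t - μ) ^ 2 / (2 * τ ^ 2) = -t ^ 2 / 2 by
      field_simp; ring]
    field_simp
  simp_rw [hfg] at key
  rw [integral_const_mul, smul_eq_mul] at key
  rw [stdNormalCDF]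
  exact mul_left_cancel₀ (inv_ne_zero hτ.ne') key

theorem call_option_expectation (S K r σ T : ℝ) (hS : 0 < S) (hK : 0 < K)
    (hσ : 0 < σ) (hT : 0 < T) :
    (∫ x : ℝ, max (S * Real.exp (x + r * T) - K) 0 *
        ((1 / (σ * Real.sqrt (2 * Real.pi * T))) *
          Real.exp (-(x + σ ^ 2 * T / 2) ^ 2 / (2 * σ ^ 2 * T)))) =
      S * Real.exp (r * T) *
          stdNormalCDF ((Real.log (S / K) + (r + σ ^ 2 / 2) * T) / (σ * Real.sqrt T)) -
        K * stdNormalCDF (((Real.log (S / K) + (r + σ ^ 2 / 2) * T) / (σ * Real.sqrt T))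
            - σ * Real.sqrt T) := by
  set τ : ℝ := σ * Real.sqrt T with hτ_def
  have hτ : 0 < τ := by positivity
  have hτ2 : τ ^ 2 = σ ^ 2 * T := by
    rw [hτ_def, mul_pow, sq_sqrt hT.le]
  set b : ℝ := Real.log (K / S) - r * T with hb_def
  set q : ℝ → ℝ → ℝ := fun μ x => Real.exp (-(x - μ) ^ 2 / (2 * τ ^ 2)) / (τ * Real.sqrt (2 * Real.pi))
    with hq_def
  -- the original density equals q (-τ²/2)
  have hdens : ∀ x : ℝ, (1 / (σ * Real.sqrt (2 * Real.pi * T))) *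
      Real.exp (-(x + σ ^ 2 * T / 2) ^ 2 / (2 * σ ^ 2 * T)) = q (-(τ ^ 2) / 2) x := by
    intro x
    have hden : σ * Real.sqrt (2 * Real.pi * T) = τ * Real.sqrt (2 * Real.pi) := by
      rw [mul_comm (2 * Real.pi) T, Real.sqrt_mul hT.le, hτ_def]
      ring
    rw [hq_def]
    simp only []
    have hexp : -(x + σ ^ 2 * T / 2) ^ 2 / (2 * σ ^ 2 * T)
        = -(x - (-(τ ^ 2) / 2)) ^ 2 / (2 * τ ^ 2) := by
      rw [hτ2]; ring
    rw [hexp, hden]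
    ring
  -- threshold characterization
  have hthr : ∀ x : ℝ, b ≤ x ↔ K ≤ S * Real.exp (x + r * T) := by
    intro x
    rw [hb_def, sub_le_iff_le_add, Real.log_le_iff_le_exp (by positivity), div_le_iff₀ hS,
      mul_comm (Real.exp (x + r * T)) S]
  -- rewrite integrand as indicator
  have hind : (fun x : ℝ => max (S * Real.exp (x + r * T) - K) 0 *
        ((1 / (σ * Real.sqrt (2 * Real.pi * T))) *
          Real.exp (-(x + σ ^ 2 * T / 2) ^ 2 / (2 * σ ^ 2 * T))))
      = Set.indicator (Set.Ici b)
          (fun x => (S * Real.exp (x + r * T) - K) * q (-(τ ^ 2) / 2) x) := by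
    funext x
    rw [hdens x]
    by_cases hx : x ∈ Set.Ici b
    · rw [Set.indicator_of_mem hx]
      congr 1
      exact max_eq_left (sub_nonneg.mpr ((hthr x).mp hx))
    · rw [Set.indicator_of_notMem hx]
      have : S * Real.exp (x + r * T) - K ≤ 0 := by
        rw [sub_nonpos]
        by_contra h
        exact hx ((hthr x).mpr (le_of_lt (lt_of_not_ge h)))
      rw [max_eq_right this, zero_mul]
  rw [hind, integral_indicator measurableSet_Ici]
  -- split the integrand
  have hsplit : ∀ x : ℝ, (S * Real.exp (x + r * T) - K) * q (-(τ ^ 2) / 2) x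
      = S * Real.exp (r * T) * q (τ ^ 2 / 2) x - K * q (-(τ ^ 2) / 2) x := by
    intro x
    have hq1 : Real.exp x * q (-(τ ^ 2) / 2) x = q (τ ^ 2 / 2) x := by
      rw [hq_def]
      simp only []
      rw [mul_div_assoc' , ← Real.exp_add]
      congr 2
      field_simp
      ring
    have : S * Real.exp (x + r * T) * q (-(τ ^ 2) / 2) x
        = S * Real.exp (r * T) * q (τ ^ 2 / 2) x := by
      rw [← hq1, Real.exp_add]
      ring
    calc (S * Real.exp (x + r * T) - K) * q (-(τ ^ 2) / 2) x
        = S * Real.exp (x + r * T) * q (-(τ ^ 2) / 2) x - K * q (-(τ ^ 2) / 2) x := by ring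
      _ = S * Real.exp (r * T) * q (τ ^ 2 / 2) x - K * q (-(τ ^ 2) / 2) x := by rw [this]
  simp_rw [hsplit]
  have hint1 : IntegrableOn (fun x => q (τ ^ 2 / 2) x) (Set.Ici b) :=
    (gauss_integrable (τ ^ 2 / 2) τ hτ).integrableOn
  have hint0 : IntegrableOn (fun x => q (-(τ ^ 2) / 2) x) (Set.Ici b) :=
    (gauss_integrable (-(τ ^ 2) / 2) τ hτ).integrableOn
  rw [integral_sub (hint1.const_mul _) (hint0.const_mul _), integral_const_mul, integral_const_mul,
    gauss_tail (τ ^ 2 / 2) b τ hτ, gauss_tail (-(τ ^ 2) / 2) b τ hτ]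
  have hlog : Real.log (K / S) = -Real.log (S / K) := by
    rw [Real.log_div hK.ne' hS.ne', Real.log_div hS.ne' hK.ne']
    ring
  have harg1 : (τ ^ 2 / 2 - b) / τ
      = (Real.log (S / K) + (r + σ ^ 2 / 2) * T) / (σ * Real.sqrt T) := by
    rw [hb_def, hlog, ← hτ_def]
    congr 1
    rw [hτ2]
    ring
  have harg2 : (-(τ ^ 2) / 2 - b) / τ
      = (Real.log (S / K) + (r + σ ^ 2 / 2) * T) / (σ * Real.sqrt T) - σ * Real.sqrt T := by
    rw [hb_def, hlog, ← hτ_def]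
    field_simp
    linear_combination hτ2
  rw [harg1, harg2]
end

section
/- The Black-Scholes price satisfies max(S - K e^{-rT}, 0) < S N(d₁) - K e^{-rT} N(d₂) < S for all S,K>0, σ>0, T>0, r∈ℝ. -/
/-!
Put `a = σ√T`, `c = K e^{-rT}` and `d = d₂`, so that `d₁ = d + a` and `S = c e^{a d + a²/2}`.
Completing the square gives `S φ(u + a) = c φ(u) e^{a (d - u)}` for the standard normal density `φ`,
so the integrand `u ↦ S φ(u + a) - c φ(u)` is positive for `u < d` and negative for `u > d`.
Its integral over `(-∞, d]` is the call price `S N(d + a) - c N(d)`, which is therefore positive,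
and its integral over `(d, ∞)` is `(S - c)` minus the price, which is therefore negative.
The upper bound only uses `0 < N < 1`.
-/

open MeasureTheory Real

open ProbabilityTheory Set

local notation "φ" => gaussianPDFReal 0 1

theorem setIntegral_pos_of_forall_pos {X : Type*} [MeasurableSpace X] {μ : Measure X}
    {s : Set X} {f : X → ℝ} (hs : MeasurableSet s) (hμs : μ s ≠ 0) (hf : IntegrableOn f s μ)
    (hpos : ∀ x ∈ s, 0 < f x) : 0 < ∫ x in s, f x ∂μ := by
  have hsupp : Function.support f ∩ s = s := inter_eq_right.2 fun x hx => (hpos x hx).ne'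
  rw [setIntegral_pos_iff_support_of_nonneg_ae
    ((ae_restrict_iff' hs).2 (ae_of_all _ fun x hx => (hpos x hx).le)) hf, hsupp]
  exact pos_iff_ne_zero.2 hμs

section Translation

variable {E : Type*} [NormedAddCommGroup E] [NormedSpace ℝ E]

theorem setIntegral_comp_add_right_Iic (f : ℝ → E) (a x : ℝ) :
    ∫ u in Iic x, f (u + a) = ∫ t in Iic (x + a), f t := by
  simpa [preimage_add_const_Iic] using
    (measurePreserving_add_right volume a).setIntegral_preimage_emb
      (measurableEmbedding_addRight a) f (Iic (x + a))

theorem setIntegral_comp_add_right_Ioi (f : ℝ → E) (a x : ℝ) :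
    ∫ u in Ioi x, f (u + a) = ∫ t in Ioi (x + a), f t := by
  simpa [preimage_add_const_Ioi] using
    (measurePreserving_add_right volume a).setIntegral_preimage_emb
      (measurableEmbedding_addRight a) f (Ioi (x + a))

end Translation

theorem stdNormalCDF_eq_setIntegral (x : ℝ) : stdNormalCDF x = ∫ t in Iic x, φ t := by
  simp [stdNormalCDF, gaussianPDFReal, div_eq_inv_mul]

theorem setIntegral_Ioi_gaussianPDFReal (x : ℝ) : ∫ t in Ioi x, φ t = 1 - stdNormalCDF x := by
  rw [eq_sub_iff_add_eq', stdNormalCDF_eq_setIntegral, ← compl_Iic,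
    integral_add_compl measurableSet_Iic (integrable_gaussianPDFReal 0 1),
    integral_gaussianPDFReal_eq_one 0 one_ne_zero]

theorem stdNormalCDF_pos (x : ℝ) : 0 < stdNormalCDF x := by
  rw [stdNormalCDF_eq_setIntegral]
  exact setIntegral_pos_of_forall_pos measurableSet_Iic (by simp)
    (integrable_gaussianPDFReal 0 1).integrableOn fun t _ => gaussianPDFReal_pos 0 1 t one_ne_zero

theorem stdNormalCDF_lt_one (x : ℝ) : stdNormalCDF x < 1 := by
  have htail : 0 < ∫ t in Ioi x, φ t :=
    setIntegral_pos_of_forall_pos measurableSet_Ioi (by simp)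
      (integrable_gaussianPDFReal 0 1).integrableOn fun t _ => gaussianPDFReal_pos 0 1 t one_ne_zero
  linarith [setIntegral_Ioi_gaussianPDFReal x]

theorem gaussianPDFReal_zero_one_add (u a : ℝ) : φ (u + a) = φ u * exp (-(a * u) - a ^ 2 / 2) := by
  simp only [gaussianPDFReal, NNReal.coe_one, mul_assoc, ← exp_add]
  ring_nf

section BlackScholes

theorem integrable_mul_gaussianPDFReal_add_sub (S c a : ℝ) :
    Integrable fun u => S * φ (u + a) - c * φ u :=
  (((integrable_gaussianPDFReal 0 1).comp_add_right a).const_mul S).sub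
    ((integrable_gaussianPDFReal 0 1).const_mul c)

theorem setIntegral_Iic_mul_gaussianPDFReal_add_sub (S c a d : ℝ) :
    ∫ u in Iic d, (S * φ (u + a) - c * φ u) = S * stdNormalCDF (d + a) - c * stdNormalCDF d := by
  rw [integral_sub, integral_const_mul, integral_const_mul, setIntegral_comp_add_right_Iic,
    ← stdNormalCDF_eq_setIntegral, ← stdNormalCDF_eq_setIntegral]
  · exact ((integrable_gaussianPDFReal 0 1).comp_add_right a).const_mul S |>.integrableOn
  · exact (integrable_gaussianPDFReal 0 1).const_mul c |>.integrableOn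

theorem setIntegral_Ioi_mul_gaussianPDFReal_add_sub (S c a d : ℝ) :
    ∫ u in Ioi d, (S * φ (u + a) - c * φ u) =
      S - c - (S * stdNormalCDF (d + a) - c * stdNormalCDF d) := by
  rw [integral_sub, integral_const_mul, integral_const_mul, setIntegral_comp_add_right_Ioi,
    setIntegral_Ioi_gaussianPDFReal, setIntegral_Ioi_gaussianPDFReal]
  · ring
  · exact ((integrable_gaussianPDFReal 0 1).comp_add_right a).const_mul S |>.integrableOn
  · exact (integrable_gaussianPDFReal 0 1).const_mul c |>.integrableOn

variable {S c a d : ℝ}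

theorem mul_gaussianPDFReal_add_sub (hS : S = c * exp (a * d + a ^ 2 / 2)) (u : ℝ) :
    S * φ (u + a) - c * φ u = c * φ u * (exp (a * (d - u)) - 1) := by
  have hexp : exp (a * d + a ^ 2 / 2) * exp (-(a * u) - a ^ 2 / 2) = exp (a * (d - u)) := by
    rw [← exp_add]
    ring_nf
  rw [hS, gaussianPDFReal_zero_one_add, ← hexp]
  ring

theorem mul_stdNormalCDF_add_sub_pos (hS : S = c * exp (a * d + a ^ 2 / 2)) (hc : 0 < c)
    (ha : 0 < a) : 0 < S * stdNormalCDF (d + a) - c * stdNormalCDF d := by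
  rw [← setIntegral_Iic_mul_gaussianPDFReal_add_sub, integral_Iic_eq_integral_Iio]
  refine setIntegral_pos_of_forall_pos measurableSet_Iio (by simp)
    (integrable_mul_gaussianPDFReal_add_sub S c a).integrableOn fun u hu => ?_
  rw [mul_gaussianPDFReal_add_sub hS]
  refine mul_pos (mul_pos hc (gaussianPDFReal_pos 0 1 u one_ne_zero)) ?_
  exact sub_pos.2 (one_lt_exp_iff.2 (mul_pos ha (sub_pos.2 hu)))

theorem sub_lt_mul_stdNormalCDF_add_sub (hS : S = c * exp (a * d + a ^ 2 / 2)) (hc : 0 < c)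
    (ha : 0 < a) : S - c < S * stdNormalCDF (d + a) - c * stdNormalCDF d := by
  have htail : 0 < ∫ u in Ioi d, -(S * φ (u + a) - c * φ u) := by
    refine setIntegral_pos_of_forall_pos measurableSet_Ioi (by simp)
      (integrable_mul_gaussianPDFReal_add_sub S c a).neg.integrableOn fun u hu => ?_
    rw [mul_gaussianPDFReal_add_sub hS, neg_pos]
    refine mul_neg_of_pos_of_neg (mul_pos hc (gaussianPDFReal_pos 0 1 u one_ne_zero)) ?_
    exact sub_neg.2 (exp_lt_one_iff.2 (mul_neg_of_pos_of_neg ha (sub_neg.2 hu)))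
  rw [integral_neg, setIntegral_Ioi_mul_gaussianPDFReal_add_sub] at htail
  linarith

end BlackScholes

theorem blackScholes_no_arbitrage_bounds (S K r σ T : ℝ) (hS : 0 < S) (hK : 0 < K)
    (hσ : 0 < σ) (hT : 0 < T) :
    max (S - K * Real.exp (-(r * T))) 0 <
        S * stdNormalCDF ((Real.log (S / K) + (r + σ ^ 2 / 2) * T) / (σ * Real.sqrt T)) -
          K * Real.exp (-(r * T)) *
            stdNormalCDF ((Real.log (S / K) + (r + σ ^ 2 / 2) * T) / (σ * Real.sqrt T)
              - σ * Real.sqrt T) ∧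
      S * stdNormalCDF ((Real.log (S / K) + (r + σ ^ 2 / 2) * T) / (σ * Real.sqrt T)) -
          K * Real.exp (-(r * T)) *
            stdNormalCDF ((Real.log (S / K) + (r + σ ^ 2 / 2) * T) / (σ * Real.sqrt T)
              - σ * Real.sqrt T) < S := by
  set a := σ * Real.sqrt T
  set c := K * Real.exp (-(r * T))
  set d₁ := (Real.log (S / K) + (r + σ ^ 2 / 2) * T) / a
  have ha : 0 < a := by positivity
  have hc : 0 < c := by positivity
  have hprice : S = c * exp (a * (d₁ - a) + a ^ 2 / 2) := by
    have had₁ : a * d₁ = Real.log (S / K) + (r + σ ^ 2 / 2) * T := mul_div_cancel₀ _ ha.ne'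
    have ha2 : a ^ 2 = σ ^ 2 * T := by rw [mul_pow, sq_sqrt hT.le]
    have hexponent : a * (d₁ - a) + a ^ 2 / 2 = Real.log (S / K) + r * T := by
      linear_combination had₁ - ha2 / 2
    rw [hexponent, exp_add, exp_log (div_pos hS hK)]
    calc S = S * (exp (-(r * T)) * exp (r * T)) := by
          rw [← exp_add, neg_add_cancel, exp_zero, mul_one]
      _ = c * (S / K * exp (r * T)) := by simp only [c]; field_simp
  have hlower := sub_lt_mul_stdNormalCDF_add_sub hprice hc ha
  have hpos := mul_stdNormalCDF_add_sub_pos hprice hc ha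
  rw [sub_add_cancel] at hlower hpos
  have hcall_lt : S * stdNormalCDF d₁ < S := mul_lt_of_lt_one_right hS (stdNormalCDF_lt_one d₁)
  have hput_pos : 0 < c * stdNormalCDF (d₁ - a) := mul_pos hc (stdNormalCDF_pos _)
  exact ⟨max_lt hlower hpos, by linarith⟩
end
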